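/- Let n ≥ 1 and let A, B ∈ M_n(ℂ). Then there exists a contraction W ∈ M_n(ℂ) (i.e., ‖W‖ ≤ 1) such that A + B = (I + A A*)^{1/2} · W · (I + B* B)^{1/2}. (Factorization established in the proof of the paper's Theorem 3.3.) -/

import Mathlib

open Matrix
open scoped ComplexOrder

namespace Matrix.PosSemidef

/-- The positive semidefinite square root of a positive semidefinite matrix
(the definition of Mathlib of December 2024, since removed). -/
noncomputable def sqrt {n : Type*} [Fintype n] [DecidableEq n] {A : Matrix n n ℂ}
    (hA : A.PosSemidef) : Matrix n n ℂ :=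
  hA.1.eigenvectorUnitary.1 * diagonal ((↑) ∘ (√·) ∘ hA.1.eigenvalues) *
  (star hA.1.eigenvectorUnitary : Matrix n n ℂ)

lemma posSemidef_sqrt {n : Type*} [Fintype n] [DecidableEq n] {A : Matrix n n ℂ}
    (hA : A.PosSemidef) : PosSemidef hA.sqrt := by
  unfold sqrt
  apply PosSemidef.mul_mul_conjTranspose_same
  refine posSemidef_diagonal_iff.mpr fun i ↦ ?_
  simp only [Function.comp_apply]
  exact_mod_cast Real.sqrt_nonneg _

end Matrix.PosSemidef

/-- The `j`-th largest value (0-indexed) of a finite family of real numbers. -/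
noncomputable def descSort {n : ℕ} (f : Fin n → ℝ) : Fin n → ℝ :=
  fun j => f (Tuple.sort f j.rev)

/-- The absolute value `|A| = (AᴴA)^{1/2}` of a complex matrix. -/
noncomputable def matAbs {n : ℕ} (A : Matrix (Fin n) (Fin n) ℂ) : Matrix (Fin n) (Fin n) ℂ :=
  (Matrix.posSemidef_conjTranspose_mul_self A).sqrt

/-- The singular values of `A`, in decreasing order, 0-indexed: `sv A 0 = s₁(A)` is the largest. -/
noncomputable def sv {n : ℕ} (A : Matrix (Fin n) (Fin n) ℂ) : Fin n → ℝ :=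
  descSort (Matrix.posSemidef_conjTranspose_mul_self A).posSemidef_sqrt.1.eigenvalues

/-- The real power `A^r` of a (positive semidefinite) matrix, via continuous functional calculus. -/
noncomputable def rpowM {n : ℕ} (A : Matrix (Fin n) (Fin n) ℂ) (r : ℝ) :
    Matrix (Fin n) (Fin n) ℂ :=
  cfc (fun x : ℝ => x ^ r) A

/-- The top-`k` indices `j = 0, …, k-1` in `Fin n`. -/
def topIdx (n k : ℕ) : Finset (Fin n) := Finset.univ.filter (fun j : Fin n => (j : ℕ) < k)

/-- The bottom-`k` indices `j = n-k, …, n-1` in `Fin n`. -/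
def botIdx (n k : ℕ) : Finset (Fin n) := Finset.univ.filter (fun j : Fin n => n - k ≤ (j : ℕ))

/-!
The block matrix `[[1 + A Aᴴ, A + B], [(A + B)ᴴ, 1 + Bᴴ B]]` is `X Xᴴ` for
`X = [[1, A], [Bᴴ, 1]]`, hence positive semidefinite. Writing its diagonal blocks as `P Pᴴ` and
`Qᴴ Q` with `P, Q` the (invertible) square roots, the Schur complement `Qᴴ Q - Cᴴ (P Pᴴ)⁻¹ C`
of the top-left block equals `Qᴴ (1 - Wᴴ W) Q` for `W = P⁻¹ C Q⁻¹`, so `W` is a contraction.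
-/

namespace Matrix

variable {𝕜 : Type*} [RCLike 𝕜] {m n : Type*} [Fintype m] [Fintype n] [DecidableEq m]
  [DecidableEq n]

lemma posSemidef_fromBlocks_one_add_mul_conjTranspose (A B : Matrix m n 𝕜) :
    (fromBlocks (1 + A * Aᴴ) (A + B) (A + B)ᴴ (1 + Bᴴ * B)).PosSemidef := by
  have hfactor : fromBlocks (1 + A * Aᴴ) (A + B) (A + B)ᴴ (1 + Bᴴ * B) =
      fromBlocks 1 A Bᴴ 1 * (fromBlocks 1 A Bᴴ 1)ᴴ := by
    rw [fromBlocks_conjTranspose, fromBlocks_multiply]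
    simp [add_comm, conjTranspose_add]
  rw [hfactor]
  exact posSemidef_self_mul_conjTranspose _

lemma PosSemidef.one_sub_conjTranspose_mul_self_of_fromBlocks {P : Matrix m m 𝕜}
    {Q : Matrix n n 𝕜} (hP : IsUnit P) (hQ : IsUnit Q) {C : Matrix m n 𝕜}
    (h : (fromBlocks (P * Pᴴ) C Cᴴ (Qᴴ * Q)).PosSemidef) :
    (1 - (P⁻¹ * C * Q⁻¹)ᴴ * (P⁻¹ * C * Q⁻¹)).PosSemidef := by
  have hPP : (P * Pᴴ).PosDef := .mul_conjTranspose_self P (vecMul_injective_of_isUnit hP)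
  have := hPP.isUnit.invertible
  have hSchur := (PosDef.fromBlocks₁₁ C (Qᴴ * Q) hPP).mp h
  have hQ_cancel : Q⁻¹ᴴ * (Qᴴ * Q) * Q⁻¹ = 1 := by
    rw [conjTranspose_nonsing_inv, ← Matrix.mul_assoc, Matrix.mul_assoc _ Q,
      nonsing_inv_mul _ ((isUnit_iff_isUnit_det _).mp ((isUnit_conjTranspose Q).mpr hQ)),
      mul_nonsing_inv _ ((isUnit_iff_isUnit_det _).mp hQ), one_mul]
  have hSchur_eq : 1 - (P⁻¹ * C * Q⁻¹)ᴴ * (P⁻¹ * C * Q⁻¹) =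
      Q⁻¹ᴴ * (Qᴴ * Q - Cᴴ * (P * Pᴴ)⁻¹ * C) * Q⁻¹ := by
    rw [Matrix.mul_sub, Matrix.sub_mul, hQ_cancel, Matrix.mul_inv_rev, conjTranspose_nonsing_inv]
    simp only [conjTranspose_mul, conjTranspose_nonsing_inv, Matrix.mul_assoc]
  rw [hSchur_eq]
  exact hSchur.conjTranspose_mul_mul_same _

lemma exists_contraction_eq_mul_mul_of_posSemidef_fromBlocks {P : Matrix m m 𝕜}
    {Q : Matrix n n 𝕜} (hP : IsUnit P) (hQ : IsUnit Q) {C : Matrix m n 𝕜}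
    (h : (fromBlocks (P * Pᴴ) C Cᴴ (Qᴴ * Q)).PosSemidef) :
    ∃ W : Matrix m n 𝕜, (1 - Wᴴ * W).PosSemidef ∧ C = P * W * Q := by
  refine ⟨P⁻¹ * C * Q⁻¹, PosSemidef.one_sub_conjTranspose_mul_self_of_fromBlocks hP hQ h, ?_⟩
  simp only [Matrix.mul_assoc, nonsing_inv_mul _ ((isUnit_iff_isUnit_det Q).mp hQ), Matrix.mul_one,
    mul_nonsing_inv_cancel_left _ _ ((isUnit_iff_isUnit_det P).mp hP)]

end Matrix

open scoped MatrixOrder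

lemma rpowM_half_eq_sqrt {n : ℕ} {M : Matrix (Fin n) (Fin n) ℂ} (hM : M.PosSemidef) :
    rpowM M (1 / 2) = CFC.sqrt M := by
  rw [CFC.sqrt_eq_real_sqrt M hM.nonneg, cfcₙ_eq_cfc]
  exact cfc_congr fun x _ ↦ (Real.sqrt_eq_rpow x).symm

theorem add_eq_sqrt_mul_contraction_mul_sqrt_general {n : ℕ}
    (A B : Matrix (Fin n) (Fin n) ℂ) :
    ∃ W : Matrix (Fin n) (Fin n) ℂ,
      (1 - Wᴴ * W).PosSemidef ∧
        A + B = rpowM (1 + A * Aᴴ) (1/2) * W * rpowM (1 + Bᴴ * B) (1/2) := by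
  have hA : (1 + A * Aᴴ).PosDef := PosDef.one.add_posSemidef (posSemidef_self_mul_conjTranspose A)
  have hB : (1 + Bᴴ * B).PosDef := PosDef.one.add_posSemidef (posSemidef_conjTranspose_mul_self B)
  rw [rpowM_half_eq_sqrt hA.posSemidef, rpowM_half_eq_sqrt hB.posSemidef]
  refine exists_contraction_eq_mul_mul_of_posSemidef_fromBlocks
    ((CFC.isUnit_sqrt_iff _ hA.posSemidef.nonneg).mpr hA.isUnit)
    ((CFC.isUnit_sqrt_iff _ hB.posSemidef.nonneg).mpr hB.isUnit) ?_
  rw [(CFC.sqrt_nonneg (1 + A * Aᴴ)).posSemidef.isHermitian.eq,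
    (CFC.sqrt_nonneg (1 + Bᴴ * B)).posSemidef.isHermitian.eq,
    CFC.sqrt_mul_sqrt_self _ hA.posSemidef.nonneg, CFC.sqrt_mul_sqrt_self _ hB.posSemidef.nonneg]
  exact posSemidef_fromBlocks_one_add_mul_conjTranspose A B

/-- factorization from the proof of Theorem 3.3.
For any `A, B`, there is a contraction `W` (i.e. `WᴴW ≤ I`) with
`A + B = (I + AAᴴ)^{1/2} · W · (I + BᴴB)^{1/2}`. -/
theorem add_eq_sqrt_mul_contraction_mul_sqrt {n : ℕ} (hn : 1 ≤ n)
    (A B : Matrix (Fin n) (Fin n) ℂ) :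
    ∃ W : Matrix (Fin n) (Fin n) ℂ,
      (1 - Wᴴ * W).PosSemidef ∧
        A + B = rpowM (1 + A * Aᴴ) (1/2) * W * rpowM (1 + Bᴴ * B) (1/2) :=
  add_eq_sqrt_mul_contraction_mul_sqrt_general A B
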